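/- Multi-channel prefix-tuning reduces to initial state tuning: for a D-channel S4 module where each channel d runs an independent scalar SSM with matrices (Ā^{(d)}, B̄^{(d)}, C̄^{(d)}) and initial states h_0^{(d)}, prepending a prefix P = (p_1,...,p_M) ∈ ℝ^{D×M} and discarding the first M outputs is functionally identical (on all inputs X ∈ ℝ^{D×N}) to running on X alone with initial states h_0^{*(d)} = Ā^{(d)M} h_0^{(d)} + Σ_{m=1}^M (Ā^{(d)})^{M-m} B̄^{(d)} p_m^{(d)} for each channel d. -/
import Mathlib


open Matrix

/-- Hidden state of a discrete-time linear SSM: `h_t = Ā h_{t-1} + B̄ x_t`. -/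
noncomputable def hid {H : ℕ} (A : Matrix (Fin H) (Fin H) ℝ) (B h0 : Fin H → ℝ)
    (x : ℕ → ℝ) : ℕ → Fin H → ℝ
  | 0 => h0
  | t + 1 => A.mulVec (hid A B h0 x t) + x (t + 1) • B

lemma hid_closed {H : ℕ} (A : Matrix (Fin H) (Fin H) ℝ) (B h0 : Fin H → ℝ)
    (x : ℕ → ℝ) : ∀ M, hid A B h0 x M =
      (A ^ M).mulVec h0 + ∑ m ∈ Finset.Icc 1 M, x m • (A ^ (M - m)).mulVec B
  | 0 => by simp [hid]
  | M + 1 => by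
    show A.mulVec (hid A B h0 x M) + x (M + 1) • B = _
    rw [hid_closed A B h0 x M, Finset.sum_Icc_succ_top (by omega)]
    have key : ∀ v : Fin H → ℝ, A.mulVec v = A.mulVecLin v := fun _ => rfl
    simp only [key, map_add, map_sum, _root_.map_smul]
    simp only [← key, Matrix.mulVec_mulVec, ← pow_succ']
    have h1 : ∀ m ∈ Finset.Icc 1 M, x m • (A ^ (M - m + 1)).mulVec B
        = x m • (A ^ (M + 1 - m)).mulVec B := by
      intro m hm
      simp only [Finset.mem_Icc] at hm
      rw [show M - m + 1 = M + 1 - m from by omega]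
    rw [Finset.sum_congr rfl h1]
    simp [add_assoc, Matrix.one_mulVec]

lemma hid_shift {H : ℕ} (A : Matrix (Fin H) (Fin H) ℝ) (B h0 : Fin H → ℝ)
    (x : ℕ → ℝ) (M : ℕ) : ∀ n, hid A B h0 x (M + n)
      = hid A B (hid A B h0 x M) (fun t => x (M + t)) n
  | 0 => rfl
  | n + 1 => by
    show A.mulVec (hid A B h0 x (M + n)) + x (M + n + 1) • B = _
    rw [hid_shift A B h0 x M n]
    rfl

lemma hid_congr {H : ℕ} (A : Matrix (Fin H) (Fin H) ℝ) (B h0 : Fin H → ℝ)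
    (x₁ x₂ : ℕ → ℝ) (hx : ∀ t, 1 ≤ t → x₁ t = x₂ t) :
    ∀ n, hid A B h0 x₁ n = hid A B h0 x₂ n
  | 0 => rfl
  | n + 1 => by
    show A.mulVec (hid A B h0 x₁ n) + x₁ (n + 1) • B = _
    rw [hid_congr A B h0 x₁ x₂ hx n, hx (n + 1) (by omega)]
    rfl

/-- Multi-channel prefix-tuning reduces to initial state tuning: prepending a prefix of
length `M` and discarding the first `M` outputs equals running on the input alone with
per-channel initial states `Ā^M h_0 + Σ_{m=1}^M Ā^{M-m} B̄ p_m`. -/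
theorem stmt17 {D H : ℕ} (A : Fin D → Matrix (Fin H) (Fin H) ℝ)
    (B C : Fin D → Fin H → ℝ) (h0 : Fin D → Fin H → ℝ)
    (M : ℕ) (p x : Fin D → ℕ → ℝ) :
    ∀ (d : Fin D) (n : ℕ), 1 ≤ n →
      C d ⬝ᵥ hid (A d) (B d) (h0 d)
          (fun t => if t ≤ M then p d t else x d (t - M)) (M + n)
        = C d ⬝ᵥ hid (A d) (B d)
            ((A d ^ M).mulVec (h0 d)
              + ∑ m ∈ Finset.Icc 1 M, p d m • (A d ^ (M - m)).mulVec (B d))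
            (x d) n := by
  intro d n _
  set xp : ℕ → ℝ := fun t => if t ≤ M then p d t else x d (t - M) with hxp
  rw [hid_shift]
  have hinit : hid (A d) (B d) (h0 d) xp M
      = (A d ^ M).mulVec (h0 d)
        + ∑ m ∈ Finset.Icc 1 M, p d m • (A d ^ (M - m)).mulVec (B d) := by
    rw [hid_closed]
    congr 1
    apply Finset.sum_congr rfl
    intro m hm
    simp only [Finset.mem_Icc] at hm
    simp [hxp, hm.2]
  rw [hinit, hid_congr (A d) (B d) _ _ (x d)]
  intro t ht
  simp only [hxp]
  rw [if_neg (by omega)]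
  congr 1
  omega
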